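/- arXiv:1504.06596 — 6 statements merged into one kernel-verified Lean document; each statement's English description precedes it below -/
import Mathlib

section
/- If H is a panchromatic pattern and H' is an induced subdigraph of H, then H' is a panchromatic pattern. -/
/-- A walk in `D` (as a list of at least two vertices) whose sequence of
arc-colours (given by `ς`) forms a walk in `H`. -/
def IsHWalk {V W : Type} (D : V → V → Prop) (H : W → W → Prop) (ς : V → V → W)
    (l : List V) : Prop :=
  2 ≤ l.length ∧ l.Chain' D ∧ ((l.zip l.tail).map fun p => ς p.1 p.2).Chain' H

/-- There is an `H`-walk in `D` from `a` to `b`. -/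
def HReach {V W : Type} (D : V → V → Prop) (H : W → W → Prop) (ς : V → V → W)
    (a b : V) : Prop :=
  ∃ l : List V, IsHWalk D H ς l ∧ l.head? = some a ∧ l.getLast? = some b

/-- `K` is an `H`-kernel of the `H`-coloured digraph `D`: it is `H`-independent
and `H`-absorbent. -/
def IsHKernel {V W : Type} (D : V → V → Prop) (H : W → W → Prop) (ς : V → V → W)
    (K : Set V) : Prop :=
  (∀ a ∈ K, ∀ b ∈ K, a ≠ b → ¬ HReach D H ς a b) ∧
  (∀ v, v ∉ K → ∃ b ∈ K, HReach D H ς v b)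

/-- `H` is a panchromatic pattern: every digraph with every `H`-colouring
admits an `H`-kernel. -/
def IsPanchromatic {W : Type} (H : W → W → Prop) : Prop :=
  ∀ (V : Type) (D : V → V → Prop) (ς : V → V → W), ∃ K : Set V, IsHKernel D H ς K

/-- `H` is bicomplete: the vertex set splits as `X ⊔ Xᶜ`, both parts induce
complete digraphs (with loops), and all arcs from `Xᶜ` to `X` are present. -/
def IsBicomplete {W : Type} (H : W → W → Prop) : Prop :=
  ∃ X : Set W, (∀ a ∈ X, ∀ b ∈ X, H a b) ∧ (∀ a ∉ X, ∀ b ∉ X, H a b) ∧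
    (∀ x ∈ X, ∀ y ∉ X, H y x)

/-- `H` is an expansion of `2K₁`: two nonempty classes, each inducing a
complete looped digraph, with no arcs between them. -/
def IsExpansion2K1 {W : Type} (H : W → W → Prop) : Prop :=
  ∃ C : Set W, C.Nonempty ∧ Cᶜ.Nonempty ∧
    (∀ a ∈ C, ∀ b ∈ C, H a b) ∧ (∀ a ∈ Cᶜ, ∀ b ∈ Cᶜ, H a b) ∧
    (∀ a b, (a ∈ C ∧ b ∈ Cᶜ) ∨ (a ∈ Cᶜ ∧ b ∈ C) → ¬ H a b)

/-! Colour the arcs of `D` by an induced subdigraph `H'` of `H` and read the colours in `H`: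
since `H'` is induced, the `H`-walks of `D` are exactly its `H'`-walks, so an `H`-kernel of `D`
is an `H'`-kernel. -/

section Comap

variable {V W W' : Type} (D : V → V → Prop) (H : W → W → Prop) (f : W' → W) (ς : V → V → W')

theorem isHWalk_comap_iff (l : List V) :
    IsHWalk D (fun a b => H (f a) (f b)) ς l ↔ IsHWalk D H (fun u v => f (ς u v)) l := by
  simp only [IsHWalk, List.Chain', List.isChain_map]

theorem hReach_comap_iff (a b : V) :
    HReach D (fun a b => H (f a) (f b)) ς a b ↔ HReach D H (fun u v => f (ς u v)) a b := by
  simp only [HReach, isHWalk_comap_iff]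

theorem isHKernel_comap_iff (K : Set V) :
    IsHKernel D (fun a b => H (f a) (f b)) ς K ↔ IsHKernel D H (fun u v => f (ς u v)) K := by
  simp only [IsHKernel, hReach_comap_iff]

end Comap

theorem IsPanchromatic.comap {W W' : Type} {H : W → W → Prop} (hH : IsPanchromatic H)
    (f : W' → W) : IsPanchromatic fun a b => H (f a) (f b) := fun V D ς =>
  (hH V D fun u v => f (ς u v)).imp fun K => (isHKernel_comap_iff D H f ς K).mpr

/-- If `H` is panchromatic and `H'` is an induced subdigraph of `H`
(on a vertex subset `S`), then `H'` is panchromatic. -/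
theorem stmt1 {W : Type} (H : W → W → Prop) (S : Set W)
    (hH : IsPanchromatic H) :
    IsPanchromatic (fun a b : S => H a.1 b.1) :=
  hH.comap Subtype.val
end

section
/- Let H be a digraph and W = x₀, x₁, …, x_k a walk in H such that (1) for every j with 0 ≤ j ≤ k−1 there exists a colour c_j ∈ V(H) with (x_j, c_j) ∉ A(H), and (2) (x_k, x₀) ∉ A(H). Then H is not a panchromatic pattern. -/
/-!
Take three copies `(i,0) → (i,1) → ⋯ → (i,k)`, `i ∈ ℤ/3`, of a directed path, close them into
a cycle by the arcs `(i,k) → (i+1,0)`, colour every arc leaving `(i,j)` along the cycle by `x_j`,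
and hang on each `(i,j)` with `1 ≤ j ≤ k` a sink reached by an arc of colour `c_{j-1}`, where
`(x_{j-1}, c_{j-1}) ∉ A(H)`. Sinks lie in every `H`-kernel, hence the vertices `(i,j)`, `j ≥ 1`,
do not. An `H`-walk from `(i,0)` can neither turn into a pendant arc (by the choice of `c`) nor go
on past `(i+1,0)` (as `(x_k, x_0) ∉ A(H)`), so `(i+1,0)` is the only kernel vertex it can reach,
and it does reach it along the path. So exactly one of `(i,0)` and `(i+1,0)` is in the kernel for
every `i ∈ ℤ/3`, which is impossible around a cycle of odd length.
-/

section HKernel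

variable {V W : Type} {D : V → V → Prop} {H : W → W → Prop} {ς : V → V → W}

theorem isHWalk_iff_getElem {l : List V} :
    IsHWalk D H ς l ↔ 2 ≤ l.length ∧ (∀ i (_ : i + 1 < l.length), D l[i] l[i + 1]) ∧
      ∀ i (_ : i + 2 < l.length), H (ς l[i] l[i + 1]) (ς l[i + 1] l[i + 2]) := by
  unfold IsHWalk
  refine and_congr_right fun hlen => and_congr ?_ ?_
  · exact List.isChain_iff_getElem
  · have hcolours : ((l.zip l.tail).map fun p => ς p.1 p.2).length = l.length - 1 := by
      simp only [List.length_map, List.length_zip, List.length_tail]; omega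
    refine List.isChain_iff_getElem.trans ?_
    simp only [hcolours]
    refine forall_congr' fun i => ⟨fun h hi => ?_, fun h hi => ?_⟩ <;>
      simpa [List.getElem_zip, List.getElem_tail] using h (by omega)

theorem hReach_of_adj {a b : V} (h : D a b) : HReach D H ς a b :=
  ⟨[a, b], ⟨le_rfl, List.isChain_pair.2 h, List.isChain_singleton _⟩, rfl, rfl⟩

theorem not_hReach_of_forall_not_adj {a b : V} (ha : ∀ v, ¬ D a v) : ¬ HReach D H ς a b := by
  rintro ⟨_ | ⟨a', _ | ⟨v, l⟩⟩, ⟨hlen, hchain, -⟩, hhead, -⟩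
  · simp at hlen
  · simp at hlen
  · cases hhead
    exact ha v (List.rel_of_isChain_cons_cons hchain)

namespace IsHKernel

variable {K : Set V}

theorem mem_of_forall_not_adj (hK : IsHKernel D H ς K) {s : V} (hs : ∀ v, ¬ D s v) : s ∈ K := by
  by_contra hsK
  obtain ⟨b, -, hb⟩ := hK.2 s hsK
  exact not_hReach_of_forall_not_adj hs hb

theorem not_mem_of_adj_of_forall_not_adj (hK : IsHKernel D H ς K) {a s : V} (has : D a s)
    (hs : ∀ v, ¬ D s v) : a ∉ K := fun haK =>
  hK.1 a haK s (hK.mem_of_forall_not_adj hs) (by rintro rfl; exact hs a has) (hReach_of_adj has)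

theorem false_of_triangle (hK : IsHKernel D H ς K) (h : ZMod 3 → V) (hne : ∀ i, h i ≠ h (i + 1))
    (hreach : ∀ i, HReach D H ς (h i) (h (i + 1)))
    (honly : ∀ i b, HReach D H ς (h i) b → b ∈ K → b = h (i + 1)) : False := by
  have halternate : ∀ i, h (i + 1) ∈ K ↔ h i ∉ K := fun i =>
    ⟨fun hsucc hi => hK.1 _ hi _ hsucc (hne i) (hreach i), fun hi => by
      obtain ⟨b, hb, hib⟩ := hK.2 _ hi
      exact honly i b hib hb ▸ hb⟩
  have h01 := halternate 0
  have h12 := halternate 1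
  have h20 := halternate 2
  change h 1 ∈ K ↔ _ at h01
  change h 2 ∈ K ↔ _ at h12
  change h 0 ∈ K ↔ _ at h20
  tauto

end IsHKernel

end HKernel

namespace TriangleOfPaths

variable {W : Type} (H : W → W → Prop) (k : ℕ) (x c : ℕ → W)

/-- `inl (i, j)` is the `j`-th vertex of the `i`-th path and `inr (i, j)` the sink hanging on it;
the vertices with `j > k` are isolated. -/
abbrev Vertex : Type := (ZMod 3 × ℕ) ⊕ (ZMod 3 × ℕ)

def Adj : Vertex → Vertex → Prop
  | .inl (i, j), .inl (i', j') => (i' = i ∧ j < k ∧ j' = j + 1) ∨ (j = k ∧ i' = i + 1 ∧ j' = 0)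
  | .inl (i, j), .inr (i', j') => i' = i ∧ j' = j ∧ 1 ≤ j ∧ j ≤ k
  | .inr _, _ => False

def colour : Vertex → Vertex → W
  | .inl (_, j), .inl _ => x j
  | .inl (_, j), .inr _ => c (j - 1)
  | .inr _, _ => x 0

def pathVertex (i : ZMod 3) (m : ℕ) : Vertex := if m ≤ k then .inl (i, m) else .inl (i + 1, 0)

variable {k}

theorem not_adj_inr (p : ZMod 3 × ℕ) (v : Vertex) : ¬ Adj k (.inr p) v := id

theorem adj_inr {i : ZMod 3} {j : ℕ} (hj : 1 ≤ j) (hjk : j ≤ k) :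
    Adj k (.inl (i, j)) (.inr (i, j)) :=
  ⟨rfl, rfl, hj, hjk⟩

theorem pathVertex_of_le {i : ZMod 3} {m : ℕ} (hm : m ≤ k) : pathVertex k i m = .inl (i, m) :=
  if_pos hm

theorem adj_pathVertex_succ (i : ZMod 3) {m : ℕ} (hm : m ≤ k) :
    Adj k (pathVertex k i m) (pathVertex k i (m + 1)) := by
  rw [pathVertex_of_le hm, pathVertex]
  split_ifs with hm'
  · exact .inl ⟨rfl, hm', rfl⟩
  · exact .inr ⟨by omega, rfl, rfl⟩

theorem colour_pathVertex_succ (i : ZMod 3) {m : ℕ} (hm : m ≤ k) :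
    colour x c (pathVertex k i m) (pathVertex k i (m + 1)) = x m := by
  rw [pathVertex_of_le hm, pathVertex]
  split_ifs <;> rfl

theorem eq_pathVertex_one_of_adj {i : ZMod 3} {v : Vertex} (hv : Adj k (pathVertex k i 0) v) :
    v = pathVertex k i 1 := by
  rw [pathVertex_of_le (Nat.zero_le k)] at hv
  rcases v with ⟨i', j'⟩ | ⟨i', j'⟩
  · rcases hv with ⟨rfl, hk, rfl⟩ | ⟨rfl, rfl, rfl⟩
    · exact (pathVertex_of_le hk).symm
    · rfl
  · exact absurd hv.2.2.1 (by omega)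

variable {H x c}

theorem eq_pathVertex_of_adj (hc : ∀ j < k, ¬ H (x j) (c j)) (hback : ¬ H (x k) (x 0))
    {i : ZMod 3} {m : ℕ} (hm : m ≤ k) {v : Vertex} (hv : Adj k (pathVertex k i (m + 1)) v)
    (hH : H (x m) (colour x c (pathVertex k i (m + 1)) v)) :
    m + 1 ≤ k ∧ v = pathVertex k i (m + 2) := by
  rcases hm.lt_or_eq with hm | rfl
  · rw [pathVertex_of_le hm] at hv hH
    rcases v with ⟨i', j'⟩ | ⟨i', j'⟩
    · refine ⟨hm, ?_⟩
      rcases hv with ⟨rfl, hk, rfl⟩ | ⟨rfl, rfl, rfl⟩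
      · exact (pathVertex_of_le hk).symm
      · exact (if_neg (by omega)).symm
    · exact absurd hH (hc m hm)
  · rw [pathVertex, if_neg (by omega)] at hv hH
    rcases v with ⟨i', j'⟩ | ⟨i', j'⟩
    · exact absurd hH hback
    · exact absurd hv.2.2.1 (by omega)

theorem getElem_eq_pathVertex (hc : ∀ j < k, ¬ H (x j) (c j)) (hback : ¬ H (x k) (x 0))
    {i : ZMod 3} {l : List Vertex} (hl : IsHWalk (Adj k) H (colour x c) l)
    (hhead : l.head? = some (.inl (i, 0))) :
    ∀ m (hm : m < l.length), m ≤ k + 1 ∧ l[m] = pathVertex k i m := by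
  obtain ⟨-, hadj, hH⟩ := isHWalk_iff_getElem.1 hl
  intro m
  induction m using Nat.strong_induction_on with
  | _ m ih =>
    intro hm
    match m, ih with
    | 0, _ =>
      rw [List.head?_eq_getElem?, List.getElem?_eq_some_iff] at hhead
      exact ⟨Nat.zero_le _, hhead.2.trans (pathVertex_of_le (Nat.zero_le k)).symm⟩
    | 1, ih =>
      have hv := hadj 0 hm
      rw [(ih 0 Nat.one_pos (by omega)).2] at hv
      exact ⟨by omega, eq_pathVertex_one_of_adj hv⟩
    | m + 2, ih =>
      obtain ⟨hmk, hcur⟩ := ih (m + 1) (by omega) (by omega)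
      have hv := hadj (m + 1) hm
      have hHm := hH m hm
      rw [(ih m (by omega) (by omega)).2, hcur, colour_pathVertex_succ x c i (by omega)] at hHm
      rw [hcur] at hv
      obtain ⟨hmk', hnext⟩ := eq_pathVertex_of_adj hc hback (by omega) hv hHm
      exact ⟨by omega, hnext⟩

theorem hReach_pathVertex (hwalk : ∀ j < k, H (x j) (x (j + 1))) (i : ZMod 3) :
    HReach (Adj k) H (colour x c) (.inl (i, 0)) (.inl (i + 1, 0)) := by
  refine ⟨(List.range (k + 2)).map (pathVertex k i), ?_, ?_, ?_⟩
  · simp only [isHWalk_iff_getElem, List.length_map, List.length_range, List.getElem_map,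
      List.getElem_range]
    refine ⟨by omega, fun m hm => adj_pathVertex_succ i (by omega), fun m hm => ?_⟩
    rw [colour_pathVertex_succ x c i (by omega), colour_pathVertex_succ x c i (by omega)]
    exact hwalk m (by omega)
  · simp [List.head?_range, pathVertex]
  · simp [List.getLast?_range, pathVertex]

theorem eq_of_hReach (hc : ∀ j < k, ¬ H (x j) (c j)) (hback : ¬ H (x k) (x 0)) {i : ZMod 3}
    {v : Vertex} (hv : HReach (Adj k) H (colour x c) (.inl (i, 0)) v) :
    (∃ j, 1 ≤ j ∧ j ≤ k ∧ v = .inl (i, j)) ∨ v = .inl (i + 1, 0) := by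
  obtain ⟨l, hl, hhead, hlast⟩ := hv
  rw [List.getLast?_eq_getElem?, List.getElem?_eq_some_iff] at hlast
  obtain ⟨hlen, rfl⟩ := hlast
  have hlen2 : 2 ≤ l.length := hl.1
  rw [(getElem_eq_pathVertex hc hback hl hhead _ hlen).2, pathVertex]
  split_ifs with hle
  · exact .inl ⟨_, by omega, hle, rfl⟩
  · exact .inr rfl

end TriangleOfPaths

/-- If `H` has a walk `x₀,…,x_k` such that every `x_j` (`j ≤ k-1`) misses some
colour and `(x_k, x₀) ∉ A(H)`, then `H` is not a panchromatic pattern. -/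
theorem stmt2 {W : Type} (H : W → W → Prop) (k : ℕ) (x : ℕ → W)
    (hwalk : ∀ i < k, H (x i) (x (i + 1)))
    (hmiss : ∀ j < k, ∃ c : W, ¬ H (x j) c)
    (hback : ¬ H (x k) (x 0)) :
    ¬ IsPanchromatic H := by
  intro hpan
  have : Nonempty W := ⟨x 0⟩
  choose! c hc using hmiss
  obtain ⟨K, hK⟩ := hpan _ (TriangleOfPaths.Adj k) (TriangleOfPaths.colour x c)
  refine hK.false_of_triangle (fun i => .inl (i, 0)) (fun i => by simp)
    (TriangleOfPaths.hReach_pathVertex hwalk) fun i v hv hvK => ?_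
  rcases TriangleOfPaths.eq_of_hReach hc hback hv with ⟨j, hj, hjk, rfl⟩ | rfl
  · exact absurd hvK <| hK.not_mem_of_adj_of_forall_not_adj (TriangleOfPaths.adj_inr hj hjk)
      (TriangleOfPaths.not_adj_inr _)
  · rfl
end

section
/- If H is a panchromatic pattern, then the complement digraph of H contains no odd directed cycle. -/
section Successor

variable {V W : Type} {H : W → W → Prop} {s : V → V} {c : V → W}

theorem hReach_succ_iff (hc : ∀ a, ¬ H (c a) (c (s a))) {a b : V} :
    HReach (fun u v => v = s u) H (fun u _ => c u) a b ↔ b = s a := by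
  constructor
  · rintro ⟨l, ⟨hlen, hD, hH⟩, hhead, hlast⟩
    match l, hlen with
    | [u, v], _ =>
      simp only [List.head?_cons, Option.some.injEq, List.getLast?_cons_cons,
        List.getLast?_singleton] at hhead hlast
      subst hhead hlast
      exact (List.isChain_cons_cons.mp hD).1
    | u :: v :: w :: _, _ =>
      have hv : v = s u := (List.isChain_cons_cons.mp hD).1
      have huv : H (c u) (c v) := (List.isChain_cons_cons.mp hH).1
      exact absurd (hv ▸ huv) (hc u)
  · rintro rfl
    exact ⟨[a, s a], ⟨le_rfl, List.isChain_pair.mpr rfl, List.isChain_singleton _⟩, rfl, rfl⟩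

theorem IsHKernel.succ_mem_iff {K : Set V}
    (hK : IsHKernel (fun u v => v = s u) H (fun u _ => c u) K)
    (hc : ∀ a, ¬ H (c a) (c (s a))) {a : V} (ha : a ≠ s a) : s a ∈ K ↔ a ∉ K := by
  constructor
  · exact fun hsa ha' => hK.1 a ha' (s a) hsa ha ((hReach_succ_iff hc).2 rfl)
  · intro ha'
    obtain ⟨b, hb, hab⟩ := hK.2 a ha'
    rwa [← (hReach_succ_iff hc).1 hab]

end Successor

theorem natCast_mem_iff_of_add_one_mem_iff {α : Type} [AddMonoidWithOne α] {K : Set α}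
    (hK : ∀ a : α, a + 1 ∈ K ↔ a ∉ K) (m : ℕ) : (m : α) ∈ K ↔ (Even m ↔ (0 : α) ∈ K) := by
  induction m with
  | zero => simp
  | succ m ih => rw [Nat.cast_succ, hK, ih, Nat.even_add_one]; tauto

theorem ZMod.not_forall_add_one_mem_iff_of_odd {n : ℕ} (hn : Odd n) (K : Set (ZMod n)) :
    ¬ ∀ a : ZMod n, a + 1 ∈ K ↔ a ∉ K := by
  intro hK
  have h := natCast_mem_iff_of_add_one_mem_iff hK n
  rw [ZMod.natCast_self] at h
  exact absurd (Nat.not_even_iff_odd.2 hn) (by tauto)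

theorem rel_mod_of_cycle {W : Type} {R : W → W → Prop} {k : ℕ} {x : ℕ → W} (hk : 0 < k)
    (hxk : x k = x 0) (hR : ∀ i < k, R (x i) (x (i + 1))) (m : ℕ) :
    R (x (m % k)) (x ((m + 1) % k)) := by
  have hmk : m % k < k := Nat.mod_lt _ hk
  rw [← Nat.mod_add_mod]
  rcases (Nat.add_one_le_of_lt hmk).lt_or_eq with hlt | heq
  · rw [Nat.mod_eq_of_lt hlt]
    exact hR _ hmk
  · have h := hR _ hmk
    rw [heq, hxk] at h
    rwa [heq, Nat.mod_self]

theorem ZMod.val_add_one_mod_of_dvd {n k : ℕ} [Fact (1 < n)] (hkn : k ∣ n) (a : ZMod n) :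
    (a + 1).val % k = (a.val + 1) % k := by
  rw [ZMod.val_add, ZMod.val_one, Nat.mod_mod_of_dvd _ hkn]

/-- If `H` is a panchromatic pattern, its complement digraph contains no odd
directed cycle. -/
theorem stmt3 {W : Type} (H : W → W → Prop) (hH : IsPanchromatic H) :
    ¬ ∃ (k : ℕ) (x : ℕ → W), Odd k ∧ 1 ≤ k ∧
      (∀ i < k, ∀ j < k, x i = x j → i = j) ∧ x k = x 0 ∧
      (∀ i < k, ¬ H (x i) (x (i + 1))) := by
  rintro ⟨k, x, hodd, hk, -, hxk, hx⟩
  -- tripling the cycle guarantees `a ≠ a + 1`, even when `k = 1`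
  have hn : Odd (3 * k) := (by decide : Odd 3).mul hodd
  have : Fact (1 < 3 * k) := ⟨by omega⟩
  have hc : ∀ a : ZMod (3 * k), ¬ H (x (a.val % k)) (x ((a + 1).val % k)) := fun a => by
    rw [ZMod.val_add_one_mod_of_dvd (dvd_mul_left k 3)]
    exact rel_mod_of_cycle (R := fun a b => ¬ H a b) hk hxk hx a.val
  obtain ⟨K, hK⟩ := hH (ZMod (3 * k)) (fun u v => v = u + 1) (fun u _ => x (u.val % k))
  exact ZMod.not_forall_add_one_mem_iff_of_odd hn K fun a =>
    hK.succ_mem_iff (s := (· + 1)) hc (succ_ne_self a).symm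
end

section
/- If H is a panchromatic pattern, then every directed cycle of length at least 4 in the complement digraph G = H^c is symmetric, i.e., every arc of such a cycle has its reverse also in G. -/
/-!
Colour every arc of a digraph by `y` of its head, where `y` is a closed walk of length `k` in
the complement of `H`. Then two consecutive arcs never form an `H`-walk, except where the colouring
is deliberately broken, so an `H`-kernel becomes an ordinary kernel of a small auxiliary digraph.

On the path `0 → ⋯ → m` with back arc `m → 0` (a directed cycle of length `m + 1`), a kernel must
alternate along the path and across the back arc, which is impossible when `m + 1` is odd; hence
`k` is even. If moreover `H (y 1) (y 0)`, take the path `0 → ⋯ → k + 2` with back arc `k + 1 → 0`: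
now `k → k + 1 → 0` is the only `H`-walk of length two, the sink `k + 2` keeps `k + 1` out of the
kernel, and the kernel alternates around the odd cycle `0 → ⋯ → k → 0` of length `k + 1`.
-/

section Walks

variable {V W : Type} {D : V → V → Prop} {H : W → W → Prop} {ς : V → V → W} {a b c : V}

lemma HReach.of_adj (h : D a b) : HReach D H ς a b :=
  ⟨[a, b], ⟨le_rfl, List.isChain_pair.mpr h, List.isChain_singleton _⟩, rfl, rfl⟩

lemma HReach.of_adj_adj (hab : D a b) (hbc : D b c) (hH : H (ς a b) (ς b c)) :
    HReach D H ς a c :=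
  ⟨[a, b, c], ⟨by simp, List.isChain_cons_cons.mpr ⟨hab, List.isChain_pair.mpr hbc⟩,
    List.isChain_pair.mpr hH⟩, rfl, rfl⟩

lemma HReach.adj_or_exists (h : HReach D H ς a b) :
    D a b ∨ ∃ q r, D a q ∧ D q r ∧ H (ς a q) (ς q r) ∧
      (r = b ∨ ∃ u, D r u ∧ H (ς q r) (ς r u)) := by
  obtain ⟨l, ⟨hlen, hD, hH⟩, hhead, hlast⟩ := h
  change List.IsChain D l at hD
  change List.IsChain H _ at hH
  rcases l with _ | ⟨p, _ | ⟨q, rest⟩⟩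
  · simp at hlen
  · simp at hlen
  obtain rfl : p = a := by simpa using hhead
  rcases rest with _ | ⟨r, rest⟩
  · obtain rfl : q = b := by simpa using hlast
    exact Or.inl (List.isChain_pair.mp hD)
  simp only [List.tail_cons, List.zip_cons_cons, List.map_cons, List.isChain_cons_cons] at hD hH
  refine Or.inr ⟨q, r, hD.1, hD.2.1, hH.1, ?_⟩
  rcases rest with _ | ⟨u, rest⟩
  · exact Or.inl (by simpa using hlast)
  · simp only [List.zip_cons_cons, List.map_cons, List.isChain_cons_cons] at hD hH
    exact Or.inr ⟨u, hD.2.2.1, hH.2.1⟩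

lemma HReach.adj_of_forall_not (hno : ∀ p q r, D p q → D q r → ¬ H (ς p q) (ς q r))
    (h : HReach D H ς a b) : D a b := by
  obtain h | ⟨q, r, haq, hqr, hH, -⟩ := h.adj_or_exists
  · exact h
  · exact absurd hH (hno a q r haq hqr)

lemma HReach.adj_or_eq {v₀ v₁ v₂ : V} (hne : v₀ ≠ v₁)
    (hkey : ∀ p q r, D p q → D q r → H (ς p q) (ς q r) → p = v₀ ∧ q = v₁ ∧ r = v₂)
    (h : HReach D H ς a b) : D a b ∨ a = v₀ ∧ b = v₂ := by
  obtain h | ⟨q, r, haq, hqr, hH, rfl | ⟨u, hru, hH'⟩⟩ := h.adj_or_exists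
  · exact Or.inl h
  · obtain ⟨rfl, -, rfl⟩ := hkey a q r haq hqr hH
    exact Or.inr ⟨rfl, rfl⟩
  · exact absurd ((hkey a q r haq hqr hH).2.1.symm.trans (hkey q r u hqr hru hH').1) hne.symm

lemma IsHKernel.mem_iff_not_mem {K : Set V} (hK : IsHKernel D H ς K) (hab : HReach D H ς a b)
    (hne : a ≠ b) (honly : ∀ c ∈ K, HReach D H ς a c → c = b) : a ∈ K ↔ b ∉ K := by
  refine ⟨fun ha hb => hK.1 a ha b hb hne hab, fun hb => ?_⟩
  by_contra ha
  obtain ⟨c, hc, hac⟩ := hK.2 a ha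
  exact hb (honly c hc hac ▸ hc)

end Walks

lemma iff_of_alternating_of_even {P : ℕ → Prop} {m : ℕ} (hm : Even m)
    (hstep : ∀ i < m, (P i ↔ ¬ P (i + 1))) : P m ↔ P 0 := by
  have key : ∀ j ≤ m, (P j ↔ (Even j ↔ P 0)) := by
    intro j
    induction j with
    | zero => simp
    | succ j ih =>
      intro hj
      have := hstep j (by omega)
      have := ih (by omega)
      rw [Nat.even_add_one]
      tauto
  simpa [hm] using key m le_rfl

def pathWithBackArc (N b : ℕ) (u v : ℕ) : Prop :=
  (u < N ∧ v = u + 1) ∨ (u = b ∧ v = 0)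

section Gadgets

variable {W : Type} {H : W → W → Prop} {y : ℕ → W} {k : ℕ}

lemma pathWithBackArc.eq_backArc_of_rel (hwalk : ∀ t, ¬ H (y t) (y (t + 1))) {N b p q r : ℕ}
    (hb : b ≠ 0) (hpq : pathWithBackArc N b p q) (hqr : pathWithBackArc N b q r)
    (h : H (y q) (y r)) : p + 1 = b ∧ q = b ∧ r = 0 := by
  rcases hqr with ⟨-, rfl⟩ | ⟨rfl, rfl⟩
  · exact absurd h (hwalk q)
  rcases hpq with ⟨-, hp⟩ | ⟨-, h0⟩
  · exact ⟨hp.symm, rfl, rfl⟩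
  · exact absurd h0 hb

theorem IsPanchromatic.even_of_closedWalk (hH : IsPanchromatic H) (hy : Function.Periodic y k)
    (hwalk : ∀ t, ¬ H (y t) (y (t + 1))) (hk : k ≠ 1) : Even k := by
  by_contra hodd
  obtain ⟨m, rfl⟩ : ∃ m, k = m + 1 := ⟨k - 1, by grind⟩
  have hm : Even m := by simpa [Nat.even_add_one] using hodd
  have hm0 : m ≠ 0 := by omega
  obtain ⟨K, hK⟩ := hH ℕ (pathWithBackArc m m) (fun _ v => y v)
  have hreach {u v : ℕ} (h : HReach (pathWithBackArc m m) H (fun _ v => y v) u v) :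
      pathWithBackArc m m u v := by
    refine h.adj_of_forall_not fun p q r hpq hqr h => ?_
    obtain ⟨-, hq, hr⟩ := pathWithBackArc.eq_backArc_of_rel hwalk hm0 hpq hqr h
    rw [hq, hr] at h
    exact hwalk m (by rwa [← zero_add (m + 1), hy 0])
  have hstep : ∀ i < m, (i ∈ K ↔ i + 1 ∉ K) := fun i hi =>
    hK.mem_iff_not_mem (.of_adj (Or.inl ⟨hi, rfl⟩)) (by omega) fun c _ hc => by
      rcases hreach hc with ⟨-, rfl⟩ | ⟨rfl, -⟩
      · rfl
      · omega
  have hwrap : m ∈ K ↔ 0 ∉ K :=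
    hK.mem_iff_not_mem (.of_adj (Or.inr ⟨rfl, rfl⟩)) hm0 fun c _ hc => by
      rcases hreach hc with ⟨h, -⟩ | ⟨-, rfl⟩
      · omega
      · rfl
  exact iff_not_self ((iff_of_alternating_of_even hm hstep).symm.trans hwrap)

theorem IsPanchromatic.not_rel_one_zero_of_closedWalk (hH : IsPanchromatic H)
    (hy : Function.Periodic y k) (hwalk : ∀ t, ¬ H (y t) (y (t + 1))) (hk : Even k)
    (hk0 : k ≠ 0) : ¬ H (y 1) (y 0) := by
  intro hrev
  obtain ⟨K, hK⟩ := hH ℕ (pathWithBackArc (k + 2) (k + 1)) (fun _ v => y v)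
  have hshortcut : H (y (k + 1)) (y 0) := by rwa [add_comm, hy 1]
  have hreach {u v : ℕ}
      (h : HReach (pathWithBackArc (k + 2) (k + 1)) H (fun _ v => y v) u v) :
      pathWithBackArc (k + 2) (k + 1) u v ∨ u = k ∧ v = 0 := by
    refine h.adj_or_eq (by omega : k ≠ k + 1) fun p q r hpq hqr h => ?_
    obtain ⟨hp, rfl, rfl⟩ := pathWithBackArc.eq_backArc_of_rel hwalk k.succ_ne_zero hpq hqr h
    exact ⟨by omega, rfl, rfl⟩
  have hsink : k + 2 ∈ K := by
    by_contra h
    obtain ⟨c, -, hc⟩ := hK.2 _ h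
    rcases hreach hc with (⟨h, -⟩ | ⟨h, -⟩) | ⟨h, -⟩ <;> omega
  have hmid : k + 1 ∉ K := fun h =>
    hK.1 _ h _ hsink (by omega) (.of_adj (Or.inl ⟨by omega, rfl⟩))
  have hstep : ∀ i < k, (i ∈ K ↔ i + 1 ∉ K) := fun i hi =>
    hK.mem_iff_not_mem (.of_adj (Or.inl ⟨by omega, rfl⟩)) (by omega) fun c _ hc => by
      rcases hreach hc with (⟨-, rfl⟩ | ⟨h, -⟩) | ⟨h, -⟩
      · rfl
      · omega
      · omega
  have hwrap : k ∈ K ↔ 0 ∉ K :=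
    hK.mem_iff_not_mem (.of_adj_adj (Or.inl ⟨by omega, rfl⟩) (Or.inr ⟨rfl, rfl⟩) hshortcut)
      hk0 fun c hc hkc => by
      rcases hreach hkc with (⟨-, rfl⟩ | ⟨h, -⟩) | ⟨-, rfl⟩
      · exact absurd hc hmid
      · omega
      · rfl
  exact iff_not_self ((iff_of_alternating_of_even hk hstep).symm.trans hwrap)

end Gadgets

section Cycles

variable {W : Type} {H : W → W → Prop} {x : ℕ → W} {k : ℕ}

lemma apply_mod_of_le (hclosed : x k = x 0) {t : ℕ} (ht : t ≤ k) : x (t % k) = x t := by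
  rcases ht.lt_or_eq with h | rfl
  · rw [Nat.mod_eq_of_lt h]
  · rw [Nat.mod_self, hclosed]

lemma not_rel_mod_of_cycle (hk : 0 < k) (hclosed : x k = x 0)
    (hcyc : ∀ i < k, ¬ H (x i) (x (i + 1))) (t : ℕ) : ¬ H (x (t % k)) (x ((t + 1) % k)) := by
  rw [← Nat.mod_add_mod, apply_mod_of_le hclosed (Nat.mod_lt t hk)]
  exact hcyc _ (Nat.mod_lt t hk)

end Cycles

theorem stmt8_general {W : Type} (H : W → W → Prop) (hH : IsPanchromatic H)
    (k : ℕ) (x : ℕ → W) (hk : 4 ≤ k)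
    (hclosed : x k = x 0)
    (hcyc : ∀ i < k, ¬ H (x i) (x (i + 1))) :
    ∀ i < k, ¬ H (x (i + 1)) (x i) := by
  intro i hi hrev
  have hy : Function.Periodic (fun t => x (t % k)) k := fun t => by simp
  have hwalk := not_rel_mod_of_cycle (by omega) hclosed hcyc
  have heven := hH.even_of_closedWalk hy hwalk (by omega)
  refine hH.not_rel_one_zero_of_closedWalk (hy.const_add i) (fun t => hwalk (i + t)) heven
    (by omega) ?_
  rwa [add_zero, apply_mod_of_le hclosed hi.le, apply_mod_of_le hclosed hi]

/-- If `H` is panchromatic, every directed cycle of length at least 4 in the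
complement `G = Hᶜ` is symmetric. -/
theorem stmt8 {W : Type} (H : W → W → Prop) (hH : IsPanchromatic H)
    (k : ℕ) (x : ℕ → W) (hk : 4 ≤ k)
    (hinj : ∀ i < k, ∀ j < k, x i = x j → i = j) (hclosed : x k = x 0)
    (hcyc : ∀ i < k, ¬ H (x i) (x (i + 1))) :
    ∀ i < k, ¬ H (x (i + 1)) (x i) :=
  stmt8_general H hH k x hk hclosed hcyc
end

section
/- Let H' be a contraction of a looped digraph H. Then H is a panchromatic pattern if and only if H' is a panchromatic pattern. -/
section ColourTransfer

variable {V W W' : Type} {D : V → V → Prop} {H : W → W → Prop} {H' : W' → W' → Prop}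
  {f : W → W'}

theorem isHWalk_comp_iff (hf : ∀ x y, H x y ↔ H' (f x) (f y)) (ς : V → V → W) (l : List V) :
    IsHWalk D H ς l ↔ IsHWalk D H' (fun a b => f (ς a b)) l := by
  refine and_congr_right fun _ => and_congr_right fun _ => ?_
  rw [List.Chain', List.Chain', List.isChain_map, List.isChain_map]
  exact ⟨fun h => h.imp fun _ _ => (hf _ _).1, fun h => h.imp fun _ _ => (hf _ _).2⟩

theorem hReach_comp_iff (hf : ∀ x y, H x y ↔ H' (f x) (f y)) (ς : V → V → W) (a b : V) :
    HReach D H ς a b ↔ HReach D H' (fun a b => f (ς a b)) a b :=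
  exists_congr fun l => and_congr_left' (isHWalk_comp_iff hf ς l)

theorem isHKernel_comp_iff (hf : ∀ x y, H x y ↔ H' (f x) (f y)) (ς : V → V → W) (K : Set V) :
    IsHKernel D H ς K ↔ IsHKernel D H' (fun a b => f (ς a b)) K := by
  simp only [IsHKernel, hReach_comp_iff hf ς]

theorem isPanchromatic_iff_of_surjective (hsurj : Function.Surjective f)
    (hf : ∀ x y, H x y ↔ H' (f x) (f y)) : IsPanchromatic H ↔ IsPanchromatic H' := by
  constructor
  · intro hP V D ς'
    obtain ⟨g, hg⟩ := hsurj.hasRightInverse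
    obtain ⟨K, hK⟩ := hP V D fun a b => g (ς' a b)
    refine ⟨K, ?_⟩
    simpa only [isHKernel_comp_iff hf, hg _] using hK
  · intro hP V D ς
    obtain ⟨K, hK⟩ := hP V D fun a b => f (ς a b)
    exact ⟨K, (isHKernel_comp_iff hf ς K).2 hK⟩

end ColourTransfer

theorem stmt11_general {W W' : Type} (H : W → W → Prop) (H' : W' → W' → Prop)
    (f : W → W') (hf : Function.Surjective f)
    (hall : ∀ x y x' y', f x = f x' → f y = f y' → H x y → H x' y')
    (hH' : ∀ c d, H' c d ↔ ∃ x y, f x = c ∧ f y = d ∧ H x y) :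
    IsPanchromatic H ↔ IsPanchromatic H' := by
  refine isPanchromatic_iff_of_surjective hf fun x y => ?_
  rw [hH']
  exact ⟨fun h => ⟨x, y, rfl, rfl, h⟩,
    fun ⟨x', y', hx, hy, h⟩ => hall x' y' x y hx hy h⟩

/-- If `H'` is a contraction of a looped digraph `H` (witnessed by the
surjective quotient map `f` onto the classes), then `H` is panchromatic iff
`H'` is. -/
theorem stmt11 {W W' : Type} (H : W → W → Prop) (H' : W' → W' → Prop)
    (f : W → W') (hf : Function.Surjective f)
    (hloop : ∀ x, H x x)
    (hclass : ∀ x y, f x = f y → H x y)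
    (hall : ∀ x y x' y', f x = f x' → f y = f y' → H x y → H x' y')
    (hH' : ∀ c d, H' c d ↔ ∃ x y, f x = c ∧ f y = d ∧ H x y) :
    IsPanchromatic H ↔ IsPanchromatic H' :=
  stmt11_general H H' f hf hall hH'
end

section
/- Let H be a looped digraph whose complement G = H^c (loopless) is acyclic (no directed cycles, in particular no symmetric arc pairs), bipartite as an undirected graph, and such that every vertex of G that is the head of some arc has out-degree 0 in G. Then H is bicomplete or an expansion of 2K₁. -/
/-- If `H` is looped and its loopless complement `G` is acyclic, bipartite as
an undirected graph, and every head of an arc of `G` has out-degree 0 in `G`,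
then `H` is bicomplete or an expansion of `2K₁`. -/
theorem stmt16 {W : Type} (H : W → W → Prop) (hloop : ∀ w, H w w)
    (hacyc : ¬ ∃ (k : ℕ) (x : ℕ → W), 1 ≤ k ∧
      (∀ i < k, ∀ j < k, x i = x j → i = j) ∧ x k = x 0 ∧
      (∀ i < k, x i ≠ x (i + 1) ∧ ¬ H (x i) (x (i + 1))))
    (hbip : ∃ P : Set W, ∀ a b, a ≠ b → ¬ H a b → (a ∈ P ↔ b ∉ P))
    (hsink : ∀ a b, a ≠ b → ¬ H a b → ∀ c, c ≠ b → ¬ (¬ H b c)) :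
    IsBicomplete H ∨ IsExpansion2K1 H := by
  left
  refine ⟨{w | ¬ ∃ z, z ≠ w ∧ ¬ H z w}, ?_, ?_, ?_⟩
  · intro a _ b hb
    by_cases hab : a = b
    · subst hab; exact hloop a
    · by_contra h
      exact hb ⟨a, hab, h⟩
  · intro a ha b _
    by_cases hab : a = b
    · subst hab; exact hloop a
    · simp only [Set.mem_setOf_eq, not_not] at ha
      obtain ⟨z, hz, hza⟩ := ha
      exact not_not.mp (hsink z a hz hza b (Ne.symm hab))
  · intro x hx y hy
    simp only [Set.mem_setOf_eq, not_not] at hy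
    obtain ⟨z, hz, hzy⟩ := hy
    have hxy : x ≠ y := by rintro rfl; exact hx ⟨z, hz, hzy⟩
    exact not_not.mp (hsink z y hz hzy x hxy)
end
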